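/- Let G_M be a maximal connected reducible species-character graph. Then for every reduction π and every 1 ≤ k < m, the partial reduction G_RB^k(π) contains a single connected component (ignoring isolated vertices) and has at least one active character. -/

import Mathlib

open Classical

/-- A red-black graph: a bipartite graph on characters `C` and species `S`
with edges colored black or red. -/
structure RBGraph (S C : Type) where
  black : C → S → Prop
  red : C → S → Prop

namespace RBGraph

variable {S C : Type}

/-- `c` and `s` are adjacent (by an edge of either color). -/
def adj (G : RBGraph S C) (c : C) (s : S) : Prop := G.black c s ∨ G.red c s

/-- The underlying simple graph on `S ⊕ C`. -/
def toSimple (G : RBGraph S C) : SimpleGraph (S ⊕ C) where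
  Adj x y := (∃ s c, x = Sum.inl s ∧ y = Sum.inr c ∧ G.adj c s) ∨
             (∃ s c, x = Sum.inr c ∧ y = Sum.inl s ∧ G.adj c s)
  symm := by
    constructor
    rintro x y (⟨s, c, rfl, rfl, h⟩ | ⟨s, c, rfl, rfl, h⟩)
    · exact Or.inr ⟨s, c, rfl, rfl, h⟩
    · exact Or.inl ⟨s, c, rfl, rfl, h⟩
  loopless := by
    constructor
    rintro x (⟨s, c, rfl, h, -⟩ | ⟨s, c, rfl, h, -⟩) <;> simp at h

/-- `s` lies in the connected component of `c`. -/
def sameComp (G : RBGraph S C) (c : C) (s : S) : Prop :=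
  G.toSimple.Reachable (Sum.inr c) (Sum.inl s)

/-- A character is active if it is incident to a red edge. -/
def active (G : RBGraph S C) (c : C) : Prop := ∃ s, G.red c s

/-- A character is inactive if it is incident to no red edge. -/
def inactive (G : RBGraph S C) (c : C) : Prop := ¬ G.active c

/-- A character adjacent via red edges to all species of its connected component. -/
def redUniversal (G : RBGraph S C) (c : C) : Prop :=
  G.active c ∧ ∀ s, G.sameComp c s → G.red c s

/-- Remove all edges of red-universal characters (one round). -/
def pruneStep (G : RBGraph S C) : RBGraph S C :=
  ⟨fun c s => G.black c s ∧ ¬ G.redUniversal c,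
   fun c s => G.red c s ∧ ¬ G.redUniversal c⟩

/-- Repeatedly remove all edges of red-universal characters. -/
def prune [Fintype C] (G : RBGraph S C) : RBGraph S C :=
  pruneStep^[Fintype.card C] G

/-- Realization of a character `c`: add red edges from `c` to the species of its
connected component not adjacent to `c`, delete the black edges of `c`, then
repeatedly remove the edges of red-universal characters. -/
def realize [Fintype C] (G : RBGraph S C) (c : C) : RBGraph S C :=
  prune ⟨fun c' s => G.black c' s ∧ c' ≠ c,
         fun c' s => G.red c' s ∨ (c' = c ∧ ¬ G.black c s ∧ G.sameComp c s)⟩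

/-- Realize a sequence of characters in order. -/
def realizeSeq [Fintype C] (G : RBGraph S C) (l : List C) : RBGraph S C :=
  l.foldl realize G

/-- The graph has no edges. -/
def edgeless (G : RBGraph S C) : Prop := ∀ c s, ¬ G.adj c s

/-- A red Σ-graph: an induced all-red path `s1 - c1 - s2 - c2 - s3`. -/
def redSigma (G : RBGraph S C) : Prop :=
  ∃ (c1 c2 : C) (s1 s2 s3 : S), c1 ≠ c2 ∧ s1 ≠ s2 ∧ s2 ≠ s3 ∧ s1 ≠ s3 ∧
    G.red c1 s1 ∧ G.red c1 s2 ∧ G.red c2 s2 ∧ G.red c2 s3 ∧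
    ¬ G.adj c1 s3 ∧ ¬ G.adj c2 s1

/-- A reduction of a red-black graph: an ordering of its (non-isolated) inactive
characters whose successive realizations yield an edgeless graph, never creating
a red Σ-graph. -/
def isReductionFrom [Fintype C] (G : RBGraph S C) (l : List C) : Prop :=
  l.Nodup ∧ (∀ c, G.inactive c → (∃ s, G.black c s) → c ∈ l) ∧
  (∀ c ∈ l, G.inactive c) ∧
  edgeless (realizeSeq G l) ∧
  ∀ k ≤ l.length, ¬ redSigma (realizeSeq G (l.take k))

/-- A red-black graph is reducible if it admits a reduction. -/
def reducible [Fintype C] (G : RBGraph S C) : Prop := ∃ l, isReductionFrom G l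

/-- A character is safe if its realization yields a reducible red-black graph. -/
def safe [Fintype C] (G : RBGraph S C) (c : C) : Prop := reducible (G.realize c)

/-- The (all-black) red-black graph of a binary species-character matrix. -/
def ofMatrix (M : C → S → Prop) : RBGraph S C := ⟨M, fun _ _ => False⟩

/-- A reduction of the graph of a matrix: an ordering of all characters whose
successive realizations yield an edgeless graph, never creating a red Σ-graph. -/
def isReduction [Fintype C] (M : C → S → Prop) (l : List C) : Prop :=
  l.Nodup ∧ (∀ c, c ∈ l) ∧ edgeless (realizeSeq (ofMatrix M) l) ∧
  ∀ k ≤ l.length, ¬ redSigma (realizeSeq (ofMatrix M) (l.take k))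

/-- The partial reduction after realizing the first `t` characters of `l`. -/
def partialRed [Fintype C] (M : C → S → Prop) (l : List C) (t : ℕ) : RBGraph S C :=
  realizeSeq (ofMatrix M) (l.take t)

/-- The matrix is maximal: no character's species set is contained in that of
another character. -/
def MaximalM (M : C → S → Prop) : Prop :=
  ∀ c1 c2 : C, c1 ≠ c2 → ¬ (∀ s, M c1 s → M c2 s)

/-- A vertex is non-isolated if it has an incident edge. -/
def nonIsolated (G : RBGraph S C) : S ⊕ C → Prop
  | Sum.inl s => ∃ c, G.adj c s
  | Sum.inr c => ∃ s, G.adj c s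

/-- The graph has a single connected component (ignoring isolated vertices). -/
def singleComponent (G : RBGraph S C) : Prop :=
  ∀ x y, G.nonIsolated x → G.nonIsolated y → G.toSimple.Reachable x y

/-- Species incident only to black edges (and at least one of them). -/
def SB (G : RBGraph S C) : Set S := {s | (∃ c, G.black c s) ∧ ∀ c, ¬ G.red c s}

/-- Species incident to at least one red edge. -/
def SR (G : RBGraph S C) : Set S := {s | ∃ c, G.red c s}

/-- Inactive characters whose neighborhood is contained in `S_R`. -/
def CC (G : RBGraph S C) : Set C :=
  {c | G.inactive c ∧ (∃ s, G.black c s) ∧ ∀ s, G.black c s → s ∈ G.SR}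

/-- Inactive characters with a neighbor and a non-neighbor in `S_R`. -/
def CI (G : RBGraph S C) : Set C :=
  {c | G.inactive c ∧ (∃ s ∈ G.SR, G.black c s) ∧ (∃ s ∈ G.SR, ¬ G.black c s)}

/-- Inactive characters with a neighbor in `S_B` that are universal on `S_R`. -/
def CU (G : RBGraph S C) : Set C :=
  {c | G.inactive c ∧ (∃ s ∈ G.SB, G.black c s) ∧ ∀ s ∈ G.SR, G.black c s}

/-- The subgraph induced by a set of characters and a set of species. -/
def induced (G : RBGraph S C) (Cs : Set C) (Ss : Set S) : RBGraph S C :=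
  ⟨fun c s => G.black c s ∧ c ∈ Cs ∧ s ∈ Ss,
   fun c s => G.red c s ∧ c ∈ Cs ∧ s ∈ Ss⟩

/-- `c2` is the center of an induced path on four species and three characters. -/
def isP7Center (M : C → S → Prop) (c2 : C) : Prop :=
  ∃ (c1 c3 : C) (s1 s2 s3 s4 : S),
    c1 ≠ c2 ∧ c2 ≠ c3 ∧ c1 ≠ c3 ∧
    s1 ≠ s2 ∧ s1 ≠ s3 ∧ s1 ≠ s4 ∧ s2 ≠ s3 ∧ s2 ≠ s4 ∧ s3 ≠ s4 ∧
    M c1 s1 ∧ M c1 s2 ∧ M c2 s2 ∧ M c2 s3 ∧ M c3 s3 ∧ M c3 s4 ∧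
    ¬ M c1 s3 ∧ ¬ M c1 s4 ∧ ¬ M c2 s1 ∧ ¬ M c2 s4 ∧ ¬ M c3 s1 ∧ ¬ M c3 s2

/-- Minimum-degree species none of whose characters is the center of an induced `P7`. -/
def S7m (M : C → S → Prop) : Set S :=
  {s | (∀ s', {c | M c s}.ncard ≤ {c | M c s'}.ncard) ∧
       ∀ c, M c s → ¬ isP7Center M c}

/-- The species of `S_B` not adjacent to `cm`. -/
def SBm (G : RBGraph S C) (cm : C) : Set S := {s | s ∈ G.SB ∧ ¬ G.black cm s}

/-- `C_I` together with the characters of `C_U` with a neighbor in `S_B^m`. -/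
def CBm (G : RBGraph S C) (cm : C) : Set C :=
  G.CI ∪ {c ∈ G.CU | ∃ s ∈ G.SBm cm, G.black c s}

end RBGraph

/-!
Induction on `k`; write `N(x)` for the species of `x` in `M`. When the `k`-th character `c` is
realized while some character `z` is still unrealized, pruning never removes `c`: if `c` were
red-universal at some round, no realized character could share a species with an unrealized one
(for `c` itself, for the active characters, and for the characters already pruned, each time
because a red-universal character would reach a species it is black-adjacent to), contradicting
the connectivity of `G_M`. By maximality `z` has a species outside `N(c)`, which lies in the
component of `c`, so `c` stays active.

Without a red Σ-graph, the red neighbourhoods of black-free characters sharing a species are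
nested, so in a component with an active character but no black edge, a character with a maximal
red neighbourhood would be red-universal, and pruning has removed those. Hence every component
with an edge contains an unrealized character, and every unrealized character is joined to `c`
through a species outside `N(c)`.
-/

lemma List.Nodup.not_mem_of_append_singleton_prefix {α : Type*} {L L₁ : List α} {a : α}
    (hnd : L.Nodup) (h : L₁ ++ [a] <+: L) : a ∉ L₁ :=
  ((List.nodup_append.1 (hnd.sublist h.sublist)).2.2 a · a (List.mem_singleton_self a) rfl)

lemma List.forall_prefix_take {α : Type*} {l : List α} {k : ℕ} {P : List α → Prop}
    (h : ∀ t ≤ k, P (l.take t)) (L : List α) (hL : L <+: l.take k) : P L := by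
  obtain ⟨hpre, hlen⟩ := List.prefix_take_iff.1 hL
  rw [List.prefix_iff_eq_take.1 hpre]
  exact h _ hlen

lemma List.Nodup.exists_take_add_one_eq {α : Type*} {l : List α} {k : ℕ} (hnd : l.Nodup)
    (hk : k + 1 < l.length) :
    ∃ c z, l.take (k + 1) = l.take k ++ [c] ∧ c ∉ l.take k ∧ z ∉ l.take k ∧ z ≠ c := by
  refine ⟨l[k], l[k + 1], (List.take_append_getElem _).symm, ?_⟩
  have h := hnd.sublist (List.take_sublist (k + 2) l)
  rw [← List.take_append_getElem hk, ← List.take_append_getElem (by omega : k < l.length)] at h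
  simp only [List.nodup_append, List.mem_append, List.mem_singleton] at h
  grind

namespace RBGraph

open Sum

variable {S C : Type}

section Basic

variable {G : RBGraph S C} {a b c : C} {s t : S}

lemma reachable_of_adj (h : G.adj c s) : G.toSimple.Reachable (inr c) (inl s) :=
  SimpleGraph.Adj.reachable (Or.inr ⟨s, c, rfl, rfl, h⟩)

lemma reachable_of_adj_of_adj_of_adj (h₁ : G.adj a t) (h₂ : G.adj b t) (h₃ : G.adj b s) :
    G.toSimple.Reachable (inr a) (inl s) :=
  (reachable_of_adj h₁).trans ((reachable_of_adj h₂).symm.trans (reachable_of_adj h₃))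

lemma reachable_induction (P : S ⊕ C → Prop)
    (hsc : ∀ s c, G.adj c s → P (inl s) → P (inr c))
    (hcs : ∀ s c, G.adj c s → P (inr c) → P (inl s))
    {u v : S ⊕ C} (h : G.toSimple.Reachable u v) (hu : P u) : P v := by
  obtain ⟨w⟩ := h
  induction w with
  | nil => exact hu
  | @cons x y _ hadj _ ih =>
    apply ih
    rcases x with s | c <;> rcases y with s' | c' <;> simp [toSimple] at hadj
    exacts [hsc _ _ hadj hu, hcs _ _ hadj hu]

lemma ofMatrix_adj {M : C → S → Prop} : (ofMatrix M).adj c s ↔ M c s :=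
  Iff.of_eq (or_false _)

lemma ofMatrix_induction {M : C → S → Prop} (hconn : (ofMatrix M).toSimple.Connected)
    (P : C → Prop) (hP : ∀ x y s, M x s → M y s → P x → P y) (hx : P a) (y : C) : P y :=
  reachable_induction (G := ofMatrix M) (Sum.elim (fun s => ∃ x, P x ∧ M x s) P)
    (fun s y hys ⟨x, hx, hxs⟩ => hP x y s hxs (ofMatrix_adj.1 hys) hx)
    (fun _ x hxs hx => ⟨x, hx, ofMatrix_adj.1 hxs⟩) (hconn.preconnected (inr a) (inr y)) hx

lemma MaximalM.exists_mem_diff {M : C → S → Prop} (hmax : MaximalM M) (h : a ≠ b) :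
    ∃ s, M a s ∧ ¬ M b s := by
  simpa using hmax a b h

end Basic

section RedSigma

variable {G : RBGraph S C}

lemma red_subset_or_red_subset (hσ : ¬ G.redSigma) {a b : C} (ha : ∀ s, ¬ G.black a s)
    (hb : ∀ s, ¬ G.black b s) {s₂ : S} (has : G.red a s₂) (hbs : G.red b s₂) :
    (∀ s, G.red a s → G.red b s) ∨ (∀ s, G.red b s → G.red a s) := by
  by_contra! h
  obtain ⟨⟨s₁, h1a, h1b⟩, ⟨s₃, h3b, h3a⟩⟩ := h
  refine hσ ⟨a, b, s₁, s₂, s₃, ?_, ?_, ?_, ?_, h1a, has, hbs, h3b, ?_, ?_⟩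
  · rintro rfl; exact h1b h1a
  · rintro rfl; exact h1b hbs
  · rintro rfl; exact h3a has
  · rintro rfl; exact h3a h1a
  · rintro (h | h); exacts [ha s₃ h, h3a h]
  · rintro (h | h); exacts [hb s₁ h, h1b h]

lemma exists_reachable_black_of_active [Finite C] (hσ : ¬ G.redSigma)
    (hRU : ∀ y, ¬ G.redUniversal y) {x : C} (hx : G.active x) :
    ∃ y s, G.toSimple.Reachable (inr x) (inr y) ∧ G.black y s := by
  by_contra! hblack
  obtain ⟨a, ⟨haA, hxa⟩, hmax⟩ :=
    Set.Finite.exists_maximalFor (fun y => {s | G.red y s})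
      {y | G.active y ∧ G.toSimple.Reachable (inr x) (inr y)} (Set.toFinite _) ⟨x, hx, .refl _⟩
  have hred : ∀ y s, G.toSimple.Reachable (inr a) (inr y) → G.adj y s → G.red y s :=
    fun y s hay hys => hys.resolve_left (hblack y s (hxa.trans hay))
  refine hRU a ⟨haA, fun s hs => ?_⟩
  refine (reachable_induction (fun v => G.toSimple.Reachable (inr a) v ∧
      Sum.elim (G.red a) (fun y => ∀ s, G.red y s → G.red a s) v) ?_ ?_ hs
      ⟨.refl _, fun _ => id⟩).2
  · rintro s y hys ⟨has, hsa⟩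
    have hay := has.trans (reachable_of_adj hys).symm
    have hys' := hred y s hay hys
    refine ⟨hay, ?_⟩
    rcases red_subset_or_red_subset hσ (hblack a · hxa) (hblack y · (hxa.trans hay)) hsa hys'
      with h | h
    · exact hmax ⟨⟨s, hys'⟩, hxa.trans hay⟩ h
    · exact h
  · rintro s y hys ⟨hay, hya⟩
    exact ⟨hay.trans (reachable_of_adj hys), hya s (hred y s hay hys)⟩

lemma singleComponent_of_reachable_black [Finite C] (hσ : ¬ G.redSigma)
    (hRU : ∀ y, ¬ G.redUniversal y) (w : S ⊕ C)
    (hw : ∀ y s, G.black y s → G.toSimple.Reachable (inr y) w) : G.singleComponent := by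
  have hchar : ∀ y s, G.adj y s → G.toSimple.Reachable (inr y) w := by
    rintro y s (hb | hr)
    · exact hw y s hb
    · obtain ⟨y', s', hyy', hb⟩ := exists_reachable_black_of_active hσ hRU ⟨s, hr⟩
      exact hyy'.trans (hw y' s' hb)
  suffices h : ∀ v, G.nonIsolated v → G.toSimple.Reachable v w from
    fun u v hu hv => (h u hu).trans (h v hv).symm
  rintro (s | y)
  · rintro ⟨y, hys⟩
    exact (reachable_of_adj hys).symm.trans (hchar y s hys)
  · rintro ⟨s, hys⟩
    exact hchar y s hys

end RedSigma

section Pruning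

def survives (H : RBGraph S C) (j : ℕ) (x : C) : Prop :=
  ∀ i < j, ¬ (pruneStep^[i] H).redUniversal x

variable {H G : RBGraph S C} {i j : ℕ} {x : C} {s : S}

lemma survives_zero : survives H 0 x := fun _ h => absurd h (Nat.not_lt_zero _)

lemma survives_succ :
    survives H (j + 1) x ↔ survives H j x ∧ ¬ (pruneStep^[j] H).redUniversal x :=
  Nat.forall_lt_succ_right

lemma survives.mono (h : survives H j x) (hij : i ≤ j) : survives H i x :=
  fun t ht => h t (ht.trans_le hij)

lemma iterate_pruneStep_black :
    (pruneStep^[j] H).black x s ↔ H.black x s ∧ survives H j x := by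
  induction j with
  | zero => simp [survives_zero]
  | succ j ih =>
    rw [Function.iterate_succ_apply', survives_succ, ← and_assoc, ← ih]
    rfl

lemma iterate_pruneStep_red :
    (pruneStep^[j] H).red x s ↔ H.red x s ∧ survives H j x := by
  induction j with
  | zero => simp [survives_zero]
  | succ j ih =>
    rw [Function.iterate_succ_apply', survives_succ, ← and_assoc, ← ih]
    rfl

lemma survives_of_inactive (hx : H.inactive x) (j : ℕ) : survives H j x :=
  fun _ _ hu => hx <| let ⟨s, hs⟩ := hu.1; ⟨s, (iterate_pruneStep_red.1 hs).1⟩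

lemma exists_redUniversal_of_not_survives (h : ¬ survives H j x) :
    ∃ i < j, survives H i x ∧ (pruneStep^[i] H).redUniversal x := by
  have hex : ∃ i, i < j ∧ (pruneStep^[i] H).redUniversal x := by simpa [survives] using h
  exact ⟨Nat.find hex, (Nat.find_spec hex).1,
    fun i hi hu => Nat.find_min hex hi ⟨hi.trans (Nat.find_spec hex).1, hu⟩,
    (Nat.find_spec hex).2⟩

lemma pruneStep_eq_self (h : ∀ x, ¬ G.redUniversal x) : pruneStep G = G := by
  simp only [pruneStep, h, not_false_eq_true, and_true]

lemma card_active_pruneStep_lt [Fintype C] (h : G.redUniversal x) :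
    (Finset.univ.filter (pruneStep G).active).card < (Finset.univ.filter G.active).card := by
  refine Finset.card_lt_card ⟨fun y hy => ?_, fun hsub => ?_⟩
  · obtain ⟨s, hs, -⟩ := (Finset.mem_filter.1 hy).2
    exact Finset.mem_filter.2 ⟨Finset.mem_univ y, s, hs⟩
  · obtain ⟨s, -, hs⟩ :=
      (Finset.mem_filter.1 (hsub (Finset.mem_filter.2 ⟨Finset.mem_univ x, h.1⟩))).2
    exact hs h

/-- Each round that finds a red-universal character deactivates it. -/
lemma lt_card_active_of_redUniversal_iterate [Fintype C] :
    ∀ {n : ℕ} {G : RBGraph S C}, (pruneStep^[n] G).redUniversal x →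
      n < (Finset.univ.filter G.active).card
  | 0, _, h => Finset.card_pos.2 ⟨x, Finset.mem_filter.2 ⟨Finset.mem_univ x, h.1⟩⟩
  | n + 1, G, h => by
    rw [Function.iterate_succ_apply] at h
    by_cases hG : ∃ y, G.redUniversal y
    · obtain ⟨y, hy⟩ := hG
      have := lt_card_active_of_redUniversal_iterate h
      have := card_active_pruneStep_lt hy
      omega
    · have hG : ∀ y, ¬ G.redUniversal y := fun y hy => hG ⟨y, hy⟩
      rw [pruneStep_eq_self hG, Function.iterate_fixed (pruneStep_eq_self hG)] at h
      exact absurd h (hG x)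

lemma prune_not_redUniversal [Fintype C] (H : RBGraph S C) (x : C) :
    ¬ (prune H).redUniversal x := fun h =>
  (lt_card_active_of_redUniversal_iterate h).not_ge
    ((Finset.card_filter_le _ _).trans_eq Finset.card_univ)

end Pruning

section Realization

def preRealize (G : RBGraph S C) (c : C) : RBGraph S C :=
  ⟨fun c' s => G.black c' s ∧ c' ≠ c,
   fun c' s => G.red c' s ∨ (c' = c ∧ ¬ G.black c s ∧ G.sameComp c s)⟩

variable {G : RBGraph S C} {c y : C} {s : S}

lemma preRealize_red_of_ne (hyc : y ≠ c) : (preRealize G c).red y s ↔ G.red y s := by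
  simp [preRealize, hyc]

lemma iterate_pruneStep_preRealize_black_of_inactive (hyc : y ≠ c) (hy : G.inactive y)
    (j : ℕ) : (pruneStep^[j] (preRealize G c)).black y s ↔ G.black y s := by
  have hy' : (preRealize G c).inactive y :=
    fun ⟨s, hs⟩ => hy ⟨s, (preRealize_red_of_ne hyc).1 hs⟩
  rw [iterate_pruneStep_black, and_iff_left (survives_of_inactive hy' j)]
  exact and_iff_left hyc

variable [Fintype C]

lemma realize_eq_iterate (G : RBGraph S C) (c : C) :
    realize G c = pruneStep^[Fintype.card C] (preRealize G c) := rfl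

lemma preRealize_red_of_realize_red (h : (realize G c).red y s) : (preRealize G c).red y s :=
  (iterate_pruneStep_red.1 h).1

lemma realize_red_iff_of_active (h : (realize G c).active y) :
    (realize G c).red y s ↔ (preRealize G c).red y s := by
  obtain ⟨s', hs'⟩ := h
  exact iterate_pruneStep_red.trans (and_iff_left (iterate_pruneStep_red.1 hs').2)

end Realization

section PartialReduction

variable [Fintype C] {M : C → S → Prop} {L : List C} {x y : C} {s : S}

lemma realizeSeq_append_singleton (G : RBGraph S C) (L : List C) (c : C) :
    realizeSeq G (L ++ [c]) = realize (realizeSeq G L) c := by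
  simp [realizeSeq]

lemma realizeSeq_not_red_of_not_mem (hy : y ∉ L) : ¬ (realizeSeq (ofMatrix M) L).red y s := by
  induction L using List.reverseRecOn with
  | nil => exact id
  | append_singleton L c ih =>
    simp only [List.mem_append, List.mem_singleton, not_or] at hy
    rw [realizeSeq_append_singleton]
    exact fun h => ih hy.1 ((preRealize_red_of_ne hy.2).1 (preRealize_red_of_realize_red h))

lemma realizeSeq_black_iff_of_not_mem (hy : y ∉ L) :
    (realizeSeq (ofMatrix M) L).black y s ↔ M y s := by
  induction L using List.reverseRecOn with
  | nil => rfl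
  | append_singleton L c ih =>
    simp only [List.mem_append, List.mem_singleton, not_or] at hy
    rw [realizeSeq_append_singleton, realize_eq_iterate,
      iterate_pruneStep_preRealize_black_of_inactive hy.2
        (fun ⟨_, h⟩ => realizeSeq_not_red_of_not_mem hy.1 h), ih hy.1]

lemma realizeSeq_not_black_of_mem (hy : y ∈ L) : ¬ (realizeSeq (ofMatrix M) L).black y s := by
  induction L using List.reverseRecOn with
  | nil => simp at hy
  | append_singleton L c ih =>
    rw [realizeSeq_append_singleton, realize_eq_iterate, iterate_pruneStep_black]
    rintro ⟨⟨hb, hyc⟩, -⟩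
    rcases List.mem_append.1 hy with h | h
    · exact ih h hb
    · exact hyc (List.mem_singleton.1 h)

lemma exists_prefix_red_iff_of_active (hnd : L.Nodup)
    (hx : (realizeSeq (ofMatrix M) L).active x) :
    ∃ L₁, L₁ ++ [x] <+: L ∧ ∀ s, (realizeSeq (ofMatrix M) L).red x s ↔
      ¬ M x s ∧ (realizeSeq (ofMatrix M) L₁).sameComp x s := by
  induction L using List.reverseRecOn with
  | nil => exact absurd hx.choose_spec id
  | append_singleton L c ih =>
    rw [← List.concat_eq_append, List.nodup_concat] at hnd
    rw [realizeSeq_append_singleton] at hx ⊢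
    simp_rw [realize_red_iff_of_active hx]
    by_cases hxc : x = c
    · subst hxc
      refine ⟨L, List.prefix_rfl, fun s => ?_⟩
      simp [preRealize, realizeSeq_not_red_of_not_mem hnd.1, realizeSeq_black_iff_of_not_mem hnd.1]
    · simp_rw [preRealize_red_of_ne hxc]
      obtain ⟨s', hs'⟩ := hx
      obtain ⟨L₁, hpre, hL₁⟩ :=
        ih hnd.2 ⟨s', (preRealize_red_of_ne hxc).1 (preRealize_red_of_realize_red hs')⟩
      exact ⟨L₁, hpre.trans (List.prefix_append _ _), hL₁⟩

lemma not_mem_of_realizeSeq_red (hnd : L.Nodup) (h : (realizeSeq (ofMatrix M) L).red x s) :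
    ¬ M x s :=
  let ⟨_, _, hred⟩ := exists_prefix_red_iff_of_active hnd ⟨s, h⟩
  ((hred s).1 h).1

lemma not_mem_of_preRealize_red_self {c : C} (hc : c ∉ L)
    (h : (preRealize (realizeSeq (ofMatrix M) L) c).red c s) : ¬ M c s := by
  rcases h with h | ⟨-, h, -⟩
  · exact absurd h (realizeSeq_not_red_of_not_mem hc)
  · exact (realizeSeq_black_iff_of_not_mem hc).not.1 h

lemma iterate_pruneStep_preRealize_black_of_not_mem {c : C} (hyL : y ∉ L) (hyc : y ≠ c)
    (hys : M y s) (j : ℕ) :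
    (pruneStep^[j] (preRealize (realizeSeq (ofMatrix M) L) c)).black y s :=
  (iterate_pruneStep_preRealize_black_of_inactive hyc
    (fun ⟨_, h⟩ => realizeSeq_not_red_of_not_mem hyL h) j).2
    ((realizeSeq_black_iff_of_not_mem hyL).2 hys)

lemma sameComp_of_not_mem (hSC : (realizeSeq (ofMatrix M) L).singleComponent)
    {s₀ : S} (hx : x ∉ L) (hxs : M x s₀) (hy : y ∉ L) (hys : M y s) :
    (realizeSeq (ofMatrix M) L).sameComp x s :=
  hSC (inr x) (inl s) ⟨s₀, Or.inl ((realizeSeq_black_iff_of_not_mem hx).2 hxs)⟩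
    ⟨y, Or.inl ((realizeSeq_black_iff_of_not_mem hy).2 hys)⟩

lemma realizeSeq_red_of_active (hnd : L.Nodup)
    (hSC : ∀ L₁, L₁ <+: L → (realizeSeq (ofMatrix M) L₁).singleComponent)
    (hx : (realizeSeq (ofMatrix M) L).active x) {s₀ : S} (hxs₀ : M x s₀) (hy : y ∉ L)
    (hys : M y s) (hxs : ¬ M x s) : (realizeSeq (ofMatrix M) L).red x s := by
  obtain ⟨L₁, hpre, hred⟩ := exists_prefix_red_iff_of_active hnd hx
  exact (hred s).2 ⟨hxs, sameComp_of_not_mem (hSC L₁ ((List.prefix_append _ _).trans hpre))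
    (hnd.not_mem_of_append_singleton_prefix hpre) hxs₀
    (fun h => hy (hpre.subset (List.mem_append_left _ h))) hys⟩

/-- A realized character that is no longer active either received no red edge when it was
realized, or was red-universal in some intermediate graph that still had all those red edges and
all black edges of the characters not yet realized. -/
lemma exists_redUniversal_of_inactive (hnd : L.Nodup) (hxL : x ∈ L)
    (hx : (realizeSeq (ofMatrix M) L).inactive x) :
    ∃ L₁, L₁ ++ [x] <+: L ∧ ∀ u, ¬ M x u → (realizeSeq (ofMatrix M) L₁).sameComp x u →
      ∃ G' : RBGraph S C, G'.redUniversal x ∧ G'.red x u ∧ (∀ s, G'.red x s → ¬ M x s) ∧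
        ∀ y ∉ L, ∀ s, M y s → G'.black y s := by
  induction L using List.reverseRecOn with
  | nil => simp at hxL
  | append_singleton L c ih =>
    rw [← List.concat_eq_append, List.nodup_concat] at hnd
    set G := realizeSeq (ofMatrix M) L
    rw [realizeSeq_append_singleton, realize_eq_iterate] at hx
    have hround : ∀ u, (preRealize G c).red x u → ∃ G' : RBGraph S C, G'.redUniversal x ∧
        G'.red x u ∧ (∀ s, G'.red x s → (preRealize G c).red x s) ∧
        ∀ y ∉ L ++ [c], ∀ s, M y s → G'.black y s := by
      intro u hu
      obtain ⟨i, -, hsi, hRU⟩ := exists_redUniversal_of_not_survives (H := preRealize G c)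
        fun h => hx ⟨u, iterate_pruneStep_red.2 ⟨hu, h⟩⟩
      refine ⟨_, hRU, iterate_pruneStep_red.2 ⟨hu, hsi⟩,
        fun s h => (iterate_pruneStep_red.1 h).1, fun y hy s hys => ?_⟩
      simp only [List.mem_append, List.mem_singleton, not_or] at hy
      exact iterate_pruneStep_preRealize_black_of_not_mem hy.1 hy.2 hys i
    by_cases hxc : x = c
    · subst hxc
      refine ⟨L, List.prefix_rfl, fun u hu hcomp => ?_⟩
      obtain ⟨G', hRU, hxu, hred, hblack⟩ :=
        hround u (Or.inr ⟨rfl, (realizeSeq_black_iff_of_not_mem hnd.1).not.2 hu, hcomp⟩)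
      exact ⟨G', hRU, hxu, fun s hs => not_mem_of_preRealize_red_self hnd.1 (hred s hs), hblack⟩
    have hxL : x ∈ L := by simpa [hxc] using hxL
    by_cases hact : G.active x
    · obtain ⟨L₁, hpre, hred⟩ := exists_prefix_red_iff_of_active hnd.2 hact
      refine ⟨L₁, hpre.trans (List.prefix_append _ _), fun u hu hcomp => ?_⟩
      obtain ⟨G', hRU, hxu, hred', hblack⟩ :=
        hround u ((preRealize_red_of_ne hxc).2 ((hred u).2 ⟨hu, hcomp⟩))
      exact ⟨G', hRU, hxu,
        fun s hs => ((hred s).1 ((preRealize_red_of_ne hxc).1 (hred' s hs))).1, hblack⟩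
    · obtain ⟨L₁, hpre, h⟩ := ih hnd.2 hxL hact
      refine ⟨L₁, hpre.trans (List.prefix_append _ _), fun u hu hcomp => ?_⟩
      obtain ⟨G', hRU, hxu, hred, hblack⟩ := h u hu hcomp
      exact ⟨G', hRU, hxu, hred, fun y hy => hblack y fun h => hy (List.mem_append_left _ h)⟩

end PartialReduction

section Step

variable [Fintype C] {M : C → S → Prop} {L : List C} {c e z : C} {s u : S} {j : ℕ}

lemma iterate_pruneStep_preRealize_red_self (hmax : MaximalM M)
    (hSC : (realizeSeq (ofMatrix M) L).singleComponent) (hc : c ∉ L) (hzL : z ∉ L)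
    (hzc : z ≠ c) (hzu : M z u) (hcu : ¬ M c u)
    (hj : survives (preRealize (realizeSeq (ofMatrix M) L) c) j c) :
    (pruneStep^[j] (preRealize (realizeSeq (ofMatrix M) L) c)).red c u := by
  obtain ⟨s₀, hcs₀, -⟩ := hmax.exists_mem_diff hzc.symm
  exact iterate_pruneStep_red.2 ⟨Or.inr ⟨rfl, (realizeSeq_black_iff_of_not_mem hc).not.2 hcu,
    sameComp_of_not_mem hSC hc hcs₀ hzL hzu⟩, hj⟩

lemma not_mem_fresh_of_redUniversal (hmax : MaximalM M)
    (hSC : (realizeSeq (ofMatrix M) L).singleComponent) (hc : c ∉ L)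
    (hj : survives (preRealize (realizeSeq (ofMatrix M) L) c) j c)
    (hRU : (pruneStep^[j] (preRealize (realizeSeq (ofMatrix M) L) c)).redUniversal c)
    (hzL : z ∉ L) (hzc : z ≠ c) (hzs : M z s) : ¬ M c s := by
  intro hcs
  obtain ⟨u, hzu, hcu⟩ := hmax.exists_mem_diff hzc
  refine not_mem_of_preRealize_red_self hc (iterate_pruneStep_red.1 (hRU.2 s ?_)).1 hcs
  exact reachable_of_adj_of_adj_of_adj
    (Or.inr (iterate_pruneStep_preRealize_red_self hmax hSC hc hzL hzc hzu hcu hj))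
    (Or.inl (iterate_pruneStep_preRealize_black_of_not_mem hzL hzc hzu j))
    (Or.inl (iterate_pruneStep_preRealize_black_of_not_mem hzL hzc hzs j))

/-- While `e` survives pruning, `c` would reach one of its own species through `e`; once `e` has
been pruned, `e` was red-universal and hence red-adjacent to `s`. -/
lemma not_mem_active_of_redUniversal (hnd : L.Nodup) (hmax : MaximalM M)
    (hSC : ∀ L₁, L₁ <+: L → (realizeSeq (ofMatrix M) L₁).singleComponent) (hc : c ∉ L)
    (hj : survives (preRealize (realizeSeq (ofMatrix M) L) c) j c)
    (hRU : (pruneStep^[j] (preRealize (realizeSeq (ofMatrix M) L) c)).redUniversal c)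
    (he : (realizeSeq (ofMatrix M) L).active e) (hzL : z ∉ L) (hzc : z ≠ c) (hzs : M z s) :
    ¬ M e s := by
  intro hes
  set G := realizeSeq (ofMatrix M) L
  have heL : e ∈ L := by
    by_contra h
    obtain ⟨t, ht⟩ := he
    exact realizeSeq_not_red_of_not_mem h ht
  have hec : e ≠ c := fun h => hc (h ▸ heL)
  have hfresh : ∀ {s}, M z s → ¬ M c s :=
    not_mem_fresh_of_redUniversal hmax (hSC L List.prefix_rfl) hc hj hRU hzL hzc
  have hred : ∀ {u i}, M z u → ¬ M c u → survives (preRealize G c) i c →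
      (pruneStep^[i] (preRealize G c)).red c u :=
    iterate_pruneStep_preRealize_red_self hmax (hSC L List.prefix_rfl) hc hzL hzc
  obtain ⟨u, hzu, heu⟩ := hmax.exists_mem_diff (fun h : z = e => hzL (h ▸ heL))
  obtain ⟨t, hct, het⟩ := hmax.exists_mem_diff hec.symm
  have hGeu : G.red e u := realizeSeq_red_of_active hnd hSC he hes hzL hzu heu
  have hGet : G.red e t := realizeSeq_red_of_active hnd hSC he hes hc hct het
  have hstage : ∀ {i s}, survives (preRealize G c) i e → G.red e s →
      (pruneStep^[i] (preRealize G c)).red e s :=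
    fun hi h => iterate_pruneStep_red.2 ⟨(preRealize_red_of_ne hec).2 h, hi⟩
  by_cases hsurv : survives (preRealize G c) j e
  · refine not_mem_of_preRealize_red_self hc (iterate_pruneStep_red.1 (hRU.2 t ?_)).1 hct
    exact reachable_of_adj_of_adj_of_adj (Or.inr (hred hzu (hfresh hzu) hj))
      (Or.inr (hstage hsurv hGeu)) (Or.inr (hstage hsurv hGet))
  · obtain ⟨i, hij, hsi, hRUe⟩ := exists_redUniversal_of_not_survives hsurv
    have hci := hj.mono hij.le
    have hes' := hRUe.2 s (reachable_of_adj_of_adj_of_adj (Or.inr (hstage hsi hGeu))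
      (Or.inr (hred hzu (hfresh hzu) hci)) (Or.inr (hred hzs (hfresh hzs) hci)))
    exact not_mem_of_realizeSeq_red hnd
      ((preRealize_red_of_ne hec).1 (iterate_pruneStep_red.1 hes').1) hes

/-- When `e` was realized it received a red edge to a species of `z`, so when it was
red-universal it was red-adjacent to all species of `z`. -/
lemma not_mem_of_inactive (hnd : L.Nodup) (hmax : MaximalM M)
    (hSC : ∀ L₁, L₁ <+: L → (realizeSeq (ofMatrix M) L₁).singleComponent) (he : e ∈ L)
    (hin : (realizeSeq (ofMatrix M) L).inactive e) (hzL : z ∉ L) (hzs : M z s) : ¬ M e s := by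
  intro hes
  obtain ⟨L₁, hpre, hdead⟩ := exists_redUniversal_of_inactive hnd he hin
  obtain ⟨u, hzu, heu⟩ := hmax.exists_mem_diff (fun h : z = e => hzL (h ▸ he))
  obtain ⟨G', hRU, heu', hred, hblack⟩ := hdead u heu
    (sameComp_of_not_mem (hSC L₁ ((List.prefix_append _ _).trans hpre))
      (hnd.not_mem_of_append_singleton_prefix hpre) hes
      (fun h => hzL (hpre.subset (List.mem_append_left _ h))) hzu)
  exact hred s (hRU.2 s (reachable_of_adj_of_adj_of_adj (Or.inr heu')
    (Or.inl (hblack z hzL u hzu)) (Or.inl (hblack z hzL s hzs)))) hes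

lemma survives_preRealize_self (hnd : L.Nodup) (hmax : MaximalM M)
    (hconn : (ofMatrix M).toSimple.Connected)
    (hSC : ∀ L₁, L₁ <+: L → (realizeSeq (ofMatrix M) L₁).singleComponent) (hc : c ∉ L)
    (hzL : z ∉ L) (hzc : z ≠ c) (j : ℕ) :
    survives (preRealize (realizeSeq (ofMatrix M) L) c) j c := by
  induction j with
  | zero => exact survives_zero
  | succ j ih =>
    refine survives_succ.2 ⟨ih, fun hRU => ?_⟩
    have hsep : ∀ x y s, M x s → M y s → x ∉ L ∧ x ≠ c → y ∉ L ∧ y ≠ c := by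
      rintro x y s hxs hys ⟨hxL, hxc⟩
      refine ⟨fun hyL => ?_, fun hyc => ?_⟩
      · by_cases hact : (realizeSeq (ofMatrix M) L).active y
        · exact not_mem_active_of_redUniversal hnd hmax hSC hc ih hRU hact hxL hxc hxs hys
        · exact not_mem_of_inactive hnd hmax hSC hyL hact hxL hxs hys
      · subst hyc
        exact not_mem_fresh_of_redUniversal hmax (hSC L List.prefix_rfl) hc ih hRU hxL hxc hxs hys
    exact (ofMatrix_induction hconn _ hsep ⟨hzL, hzc⟩ c).2 rfl

lemma realizeSeq_append_singleton_red_self (hnd : L.Nodup) (hmax : MaximalM M)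
    (hconn : (ofMatrix M).toSimple.Connected)
    (hSC : ∀ L₁, L₁ <+: L → (realizeSeq (ofMatrix M) L₁).singleComponent) (hc : c ∉ L)
    (hzL : z ∉ L) (hzc : z ≠ c) {y : C} (hyL : y ∉ L) (hyc : y ≠ c) (hyu : M y u)
    (hcu : ¬ M c u) : (realizeSeq (ofMatrix M) (L ++ [c])).red c u := by
  rw [realizeSeq_append_singleton]
  exact iterate_pruneStep_preRealize_red_self hmax (hSC L List.prefix_rfl) hc hyL hyc hyu hcu
    (survives_preRealize_self hnd hmax hconn hSC hc hzL hzc _)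

lemma realizeSeq_append_singleton_singleComponent (hnd : L.Nodup) (hmax : MaximalM M)
    (hconn : (ofMatrix M).toSimple.Connected)
    (hSC : ∀ L₁, L₁ <+: L → (realizeSeq (ofMatrix M) L₁).singleComponent) (hc : c ∉ L)
    (hzL : z ∉ L) (hzc : z ≠ c) (hσ : ¬ (realizeSeq (ofMatrix M) (L ++ [c])).redSigma) :
    (realizeSeq (ofMatrix M) (L ++ [c])).singleComponent := by
  have hRU : ∀ x, ¬ (realizeSeq (ofMatrix M) (L ++ [c])).redUniversal x := by
    rw [realizeSeq_append_singleton]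
    exact prune_not_redUniversal _
  refine singleComponent_of_reachable_black hσ hRU (inr c) fun y s hys => ?_
  have hy : y ∉ L ++ [c] := fun h => realizeSeq_not_black_of_mem h hys
  obtain ⟨hyL, hyc⟩ : y ∉ L ∧ y ≠ c := by simpa using hy
  obtain ⟨u, hyu, hcu⟩ := hmax.exists_mem_diff hyc
  exact (reachable_of_adj (Or.inl ((realizeSeq_black_iff_of_not_mem hy).2 hyu))).trans
    (reachable_of_adj (Or.inr (realizeSeq_append_singleton_red_self hnd hmax hconn hSC hc hzL
      hzc hyL hyc hyu hcu))).symm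

end Step

section Reduction

variable [Fintype C] {M : C → S → Prop} {l : List C}

lemma singleComponent_partialRed (hmax : MaximalM M) (hconn : (ofMatrix M).toSimple.Connected)
    (hnd : l.Nodup) (hσ : ∀ k ≤ l.length, ¬ (partialRed M l k).redSigma) :
    ∀ k < l.length, (partialRed M l k).singleComponent := by
  intro k
  induction k using Nat.strong_induction_on with
  | _ k ih =>
    intro hk
    rcases k with _ | k
    · exact fun x y _ _ => hconn.preconnected x y
    obtain ⟨c, z, htake, hc, hzL, hzc⟩ := hnd.exists_take_add_one_eq hk
    have hσk := hσ (k + 1) hk.le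
    rw [partialRed, htake] at hσk ⊢
    exact realizeSeq_append_singleton_singleComponent (hnd.sublist (List.take_sublist _ _)) hmax hconn
      (List.forall_prefix_take fun t ht => ih t (by omega) (by omega)) hc hzL hzc hσk

end Reduction

end RBGraph

/-- partial reductions of a maximal connected reducible graph are
connected and contain an active character. -/
theorem partial_reductions_connected {S C : Type} [Fintype C] (M : C → S → Prop)
    (hmax : RBGraph.MaximalM M) (hconn : (RBGraph.ofMatrix M).toSimple.Connected)
    (l : List C) (hl : RBGraph.isReduction M l) (k : ℕ) (h1 : 1 ≤ k) (h2 : k < l.length) :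
    (RBGraph.partialRed M l k).singleComponent ∧
    ∃ c, (RBGraph.partialRed M l k).active c := by
  obtain ⟨hnd, -, -, hσ⟩ := hl
  have hSC := RBGraph.singleComponent_partialRed hmax hconn hnd hσ
  refine ⟨hSC k h2, ?_⟩
  obtain ⟨k, rfl⟩ := Nat.exists_eq_add_of_le' h1
  obtain ⟨c, z, htake, hc, hzL, hzc⟩ := hnd.exists_take_add_one_eq h2
  obtain ⟨u, hzu, hcu⟩ := hmax.exists_mem_diff hzc
  refine ⟨c, u, ?_⟩
  rw [RBGraph.partialRed, htake]
  exact RBGraph.realizeSeq_append_singleton_red_self (hnd.sublist (List.take_sublist _ _)) hmax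
    hconn (List.forall_prefix_take fun t ht => hSC t (by omega)) hc hzL hzc hzL hzc hzu hcu
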